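/- arXiv:math/0505060 — 2 statements merged into one kernel-verified Lean document; each statement's English description precedes it below -/
import Mathlib

section
/- Let k be a positive integer, set α = -k, and let β, m be complex numbers such that all quantities below are defined (no division by zero). Then for every complex z, S(α,β,m,z) = m · Σ_{j=0}^{k} (β+1-k+j(z+1))_{k-j} · (m+jz+1)_{j-1} · (-k)_j / j!, where (a)_{-1} is interpreted as 1/(a-1). In particular, z ↦ S(α,β,m,z) is a polynomial in z of degree at most k-1. -/
/-!
With `α = -k`, the arguments of `Γ(β+1+jz)` and `Γ(α+β+1+j(z+1))` differ by the natural number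
`k - j`, so the functional equation turns their ratio into `(β+1-k+j(z+1))_{k-j}`; likewise
`Γ(m+j(z+1)) / Γ(m+jz+1) = (m+jz+1)_{j-1}`. The `j`-th summand is then a product of `k - j` and
`j - 1` factors affine in `z` (for `j = 0` it does not depend on `z`), so it has degree `≤ k - 1`.
-/

/-- The Pochhammer symbol (rising factorial) `(a)_l = a(a+1)⋯(a+l-1)`. -/
noncomputable def poch (a : ℂ) (l : ℕ) : ℂ := ∏ i ∈ Finset.range l, (a + i)

/-- `(a)_{j-1}` for a natural number `j`, where `(a)_{-1}` is interpreted as `1/(a-1)`. -/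
noncomputable def pochPred (a : ℂ) (j : ℕ) : ℂ :=
  if j = 0 then 1 / (a - 1) else poch a (j - 1)

open Complex Polynomial

lemma poch_eq_eval_ascPochhammer (a : ℂ) (n : ℕ) : poch a n = (ascPochhammer ℂ n).eval a := by
  induction n with
  | zero => simp [poch]
  | succ n ih =>
    rw [poch, Finset.prod_range_succ, ← poch, ih, ascPochhammer_succ_right, eval_mul]
    simp

lemma Gamma_add_nat_div_Gamma_eq_poch (s : ℂ) (hs : ∀ N : ℕ, s ≠ -N) (n : ℕ) :
    Gamma (s + n) / Gamma s = poch s n := by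
  rw [poch_eq_eval_ascPochhammer, Gamma_add_nat_div_Gamma_eq s hs]

lemma Gamma_sub_one_add_nat_div_Gamma_eq_pochPred (y : ℂ) (j : ℕ)
    (hnum : ∀ N : ℕ, y - 1 + j ≠ -N) (hden : ∀ N : ℕ, y ≠ -N) :
    Gamma (y - 1 + j) / Gamma y = pochPred y j := by
  rcases j with _ | j
  · simp only [Nat.cast_zero, add_zero] at hnum ⊢
    have hy1 : y - 1 ≠ 0 := by simpa using hnum 0
    have hrec : Gamma y = (y - 1) * Gamma (y - 1) := by
      simpa using Gamma_add_one (y - 1) hy1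
    rw [pochPred, if_pos rfl, hrec, div_mul_cancel_right₀ (Gamma_ne_zero hnum), one_div]
  · rw [pochPred, if_neg j.succ_ne_zero, Nat.add_sub_cancel,
      ← Gamma_add_nat_div_Gamma_eq_poch y hden j]
    congr 2
    push_cast
    ring

lemma Gamma_mul_Gamma_div_eq_poch_mul_pochPred {k j : ℕ} (hjk : j ≤ k) {β m z : ℂ}
    (hm : ∀ N : ℕ, m + j * (z + 1) ≠ -N) (hx : ∀ N : ℕ, -k + β + 1 + j * (z + 1) ≠ -N)
    (hy : ∀ N : ℕ, m + j * z + 1 ≠ -N) :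
    Gamma (β + 1 + j * z) * Gamma (m + j * (z + 1)) /
        (Gamma (-k + β + 1 + j * (z + 1)) * Gamma (m + j * z + 1)) =
      poch (β + 1 - k + j * (z + 1)) (k - j) * pochPred (m + j * z + 1) j := by
  have hβ : β + 1 + j * z = -k + β + 1 + j * (z + 1) + (k - j : ℕ) := by
    push_cast [hjk]
    ring
  have hm' : m + j * (z + 1) = m + j * z + 1 - 1 + j := by ring
  rw [hm'] at hm ⊢
  rw [hβ, mul_div_mul_comm, Gamma_add_nat_div_Gamma_eq_poch _ hx,
    Gamma_sub_one_add_nat_div_Gamma_eq_pochPred _ _ hm hy]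
  congr 2
  ring

def IsPolyFunOfDegreeLE {R : Type*} [Semiring R] (d : ℕ) (f : R → R) : Prop :=
  ∃ p : R[X], p.natDegree ≤ d ∧ ∀ z, f z = p.eval z

namespace IsPolyFunOfDegreeLE

section Semiring

variable {R : Type*} [Semiring R] {d e : ℕ} {f g : R → R}

lemma const (c : R) : IsPolyFunOfDegreeLE 0 fun _ => c :=
  ⟨C c, by simp, by simp⟩

lemma mono (hf : IsPolyFunOfDegreeLE d f) (hde : d ≤ e) : IsPolyFunOfDegreeLE e f :=
  let ⟨p, hp, hfp⟩ := hf
  ⟨p, hp.trans hde, hfp⟩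

lemma congr (hf : IsPolyFunOfDegreeLE d f) (hfg : ∀ z, f z = g z) : IsPolyFunOfDegreeLE d g :=
  let ⟨p, hp, hfp⟩ := hf
  ⟨p, hp, fun z => (hfg z).symm.trans (hfp z)⟩

lemma sum {ι : Type*} (s : Finset ι) {f : ι → R → R}
    (hf : ∀ i ∈ s, IsPolyFunOfDegreeLE d (f i)) :
    IsPolyFunOfDegreeLE d fun z => ∑ i ∈ s, f i z := by
  choose p hp hfp using hf
  refine ⟨∑ i ∈ s.attach, p i i.2, natDegree_sum_le_of_forall_le _ _ fun i _ => hp i i.2,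
    fun z => show ∑ i ∈ s, f i z = _ from ?_⟩
  rw [eval_finsetSum, ← Finset.sum_attach s (f · z)]
  exact Finset.sum_congr rfl fun (i : s) _ => hfp i.1 i.2 z

end Semiring

lemma mul {R : Type*} [CommSemiring R] {d e : ℕ} {f g : R → R}
    (hf : IsPolyFunOfDegreeLE d f) (hg : IsPolyFunOfDegreeLE e g) :
    IsPolyFunOfDegreeLE (d + e) fun z => f z * g z :=
  let ⟨p, hp, hfp⟩ := hf
  let ⟨q, hq, hgq⟩ := hg
  ⟨p * q, natDegree_mul_le.trans (add_le_add hp hq), by simp [hfp, hgq]⟩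

end IsPolyFunOfDegreeLE

lemma isPolyFunOfDegreeLE_poch_affine (a c : ℂ) (n : ℕ) :
    IsPolyFunOfDegreeLE n fun z => poch (a + c * z) n := by
  refine ⟨(ascPochhammer ℂ n).comp (C c * X + C a), ?_, fun z => ?_⟩
  · refine natDegree_comp_le.trans ?_
    simpa [ascPochhammer_natDegree] using Nat.mul_le_mul_left n (natDegree_linear_le (b := a))
  · simp [poch_eq_eval_ascPochhammer, eval_comp, add_comm]

lemma isPolyFunOfDegreeLE_pochPred_affine (a : ℂ) (j : ℕ) :
    IsPolyFunOfDegreeLE (j - 1) fun z => pochPred (a + j * z) j := by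
  rcases j with _ | j
  · simpa [pochPred] using IsPolyFunOfDegreeLE.const (1 / (a - 1))
  · simpa [pochPred] using isPolyFunOfDegreeLE_poch_affine a (j + 1) j

lemma isPolyFunOfDegreeLE_poch_mul_pochPred (a b c : ℂ) {k j : ℕ} (hjk : j ≤ k) :
    IsPolyFunOfDegreeLE (k - 1) fun z =>
      poch (a + j * (z + 1)) (k - j) * pochPred (b + j * z + 1) j * c := by
  rcases j with _ | j
  · simpa using (IsPolyFunOfDegreeLE.const (poch a k * pochPred (b + 1) 0 * c)).mono
      (Nat.zero_le (k - 1))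
  · refine ((((isPolyFunOfDegreeLE_poch_affine (a + (j + 1)) (j + 1) (k - (j + 1))).mul
      (isPolyFunOfDegreeLE_pochPred_affine (b + 1) (j + 1))).mul
      (IsPolyFunOfDegreeLE.const c)).mono (by omega)).congr fun z => ?_
    rw [show a + (j + 1 : ℕ) * (z + 1) = a + (j + 1) + (j + 1) * z by push_cast; ring,
      show b + (j + 1 : ℕ) * z + 1 = b + 1 + (j + 1 : ℕ) * z by ring]

theorem S_is_polynomial_in_z_general (k : ℕ) (α β m : ℂ) (hα : α = -(k : ℂ)) :
    (∀ z : ℂ,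
      (∀ j : ℕ, j ≤ k → ∀ N : ℕ, β + 1 + (j : ℂ) * z ≠ -(N : ℂ)) →
      (∀ j : ℕ, j ≤ k → ∀ N : ℕ, m + (j : ℂ) * (z + 1) ≠ -(N : ℂ)) →
      (∀ j : ℕ, j ≤ k → ∀ N : ℕ, α + β + 1 + (j : ℂ) * (z + 1) ≠ -(N : ℂ)) →
      (∀ j : ℕ, j ≤ k → ∀ N : ℕ, m + (j : ℂ) * z + 1 ≠ -(N : ℂ)) →
      m * ∑ j ∈ Finset.range (k + 1),
          (Complex.Gamma (β + 1 + (j : ℂ) * z) * Complex.Gamma (m + (j : ℂ) * (z + 1)) /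
            (Complex.Gamma (α + β + 1 + (j : ℂ) * (z + 1)) *
              Complex.Gamma (m + (j : ℂ) * z + 1))) * poch α j / (Nat.factorial j : ℂ) =
        m * ∑ j ∈ Finset.range (k + 1),
          poch (β + 1 - (k : ℂ) + (j : ℂ) * (z + 1)) (k - j) *
            pochPred (m + (j : ℂ) * z + 1) j * poch (-(k : ℂ)) j / (Nat.factorial j : ℂ)) ∧
    ∃ p : Polynomial ℂ, p.natDegree ≤ k - 1 ∧ ∀ z : ℂ,
      m * ∑ j ∈ Finset.range (k + 1),
          poch (β + 1 - (k : ℂ) + (j : ℂ) * (z + 1)) (k - j) *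
            pochPred (m + (j : ℂ) * z + 1) j * poch (-(k : ℂ)) j / (Nat.factorial j : ℂ) =
        p.eval z := by
  subst hα
  refine ⟨fun z _ hm hx hy => ?_, ?_⟩
  · refine congrArg (m * ·) (Finset.sum_congr rfl fun j hj => ?_)
    have hjk := Finset.mem_range_succ_iff.mp hj
    rw [Gamma_mul_Gamma_div_eq_poch_mul_pochPred hjk (hm j hjk) (hx j hjk) (hy j hjk)]
  · simp_rw [mul_div_assoc]
    refine ((IsPolyFunOfDegreeLE.const m).mul (IsPolyFunOfDegreeLE.sum _ fun j hj =>
      isPolyFunOfDegreeLE_poch_mul_pochPred _ _ _ (Finset.mem_range_succ_iff.mp hj))).mono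
      (zero_add _).le

/-- For `α = -k` with `k` a positive integer, the terminating series `S(α,β,m,z)` equals
`m · Σ_{j=0}^{k} (β+1-k+j(z+1))_{k-j} (m+jz+1)_{j-1} (-k)_j / j!`, and in particular
`z ↦ S(α,β,m,z)` is a polynomial in `z` of degree at most `k-1`. -/
theorem S_is_polynomial_in_z (k : ℕ) (hk : 0 < k) (α β m : ℂ) (hα : α = -(k : ℂ))
    (hm : m ≠ 0) :
    (∀ z : ℂ,
      (∀ j : ℕ, j ≤ k → ∀ N : ℕ, β + 1 + (j : ℂ) * z ≠ -(N : ℂ)) →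
      (∀ j : ℕ, j ≤ k → ∀ N : ℕ, m + (j : ℂ) * (z + 1) ≠ -(N : ℂ)) →
      (∀ j : ℕ, j ≤ k → ∀ N : ℕ, α + β + 1 + (j : ℂ) * (z + 1) ≠ -(N : ℂ)) →
      (∀ j : ℕ, j ≤ k → ∀ N : ℕ, m + (j : ℂ) * z + 1 ≠ -(N : ℂ)) →
      m * ∑ j ∈ Finset.range (k + 1),
          (Complex.Gamma (β + 1 + (j : ℂ) * z) * Complex.Gamma (m + (j : ℂ) * (z + 1)) /
            (Complex.Gamma (α + β + 1 + (j : ℂ) * (z + 1)) *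
              Complex.Gamma (m + (j : ℂ) * z + 1))) * poch α j / (Nat.factorial j : ℂ) =
        m * ∑ j ∈ Finset.range (k + 1),
          poch (β + 1 - (k : ℂ) + (j : ℂ) * (z + 1)) (k - j) *
            pochPred (m + (j : ℂ) * z + 1) j * poch (-(k : ℂ)) j / (Nat.factorial j : ℂ)) ∧
    ∃ p : Polynomial ℂ, p.natDegree ≤ k - 1 ∧ ∀ z : ℂ,
      m * ∑ j ∈ Finset.range (k + 1),
          poch (β + 1 - (k : ℂ) + (j : ℂ) * (z + 1)) (k - j) *
            pochPred (m + (j : ℂ) * z + 1) j * poch (-(k : ℂ)) j / (Nat.factorial j : ℂ) =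
        p.eval z :=
  S_is_polynomial_in_z_general k α β m hα
end

section
/- Let k and n be positive integers, set α = -k, and let β, m be complex numbers with Re(β) < -nk and such that none of the Gamma arguments appearing is a nonpositive integer. Then [Γ(β+1)/Γ(α+β+1)] · Σ_{j=0}^{k} [(β+1)_{nj} · (m)_{(n+1)j} · (α)_j] / [(α+β+1)_{(n+1)j} · (m+1)_{nj} · j!] = [Γ(β+1-m)/Γ(α+β+1-m)] · Σ_{j=0}^{k} [(α)_j · (m)_{(n+1)j} · (-1)^j] / [(m-β)_j · (m+1)_{nj} · j!] · Σ_{s=0}^{∞} [(m+j(n+1))_s · (α+j)_s] / [(m-β+j)_s · s!]. -/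
lemma poch_zero (a : ℂ) : poch a 0 = 1 := by simp [poch]

lemma poch_succ (a : ℂ) (l : ℕ) : poch a (l + 1) = poch a l * (a + l) :=
  Finset.prod_range_succ _ _

lemma poch_add (a : ℂ) (p q : ℕ) : poch a (p + q) = poch a p * poch (a + p) q := by
  unfold poch
  rw [Finset.prod_range_add]
  congr 1
  refine Finset.prod_congr rfl fun i _ => ?_
  push_cast; ring

lemma poch_succ' (a : ℂ) (l : ℕ) : poch a (l + 1) = a * poch (a + 1) l := by
  have := poch_add a 1 l
  rw [add_comm 1 l] at this
  simpa [poch_succ, poch_zero] using this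

lemma poch_ne_zero (a : ℂ) (l : ℕ) (h : ∀ i : ℕ, a + i ≠ 0) : poch a l ≠ 0 :=
  Finset.prod_ne_zero_iff.mpr fun i _ => h i

lemma poch_ne_zero' (a : ℂ) (l : ℕ) (h : ∀ N : ℕ, a ≠ -(N : ℂ)) : poch a l ≠ 0 :=
  poch_ne_zero a l fun i hi => h i (by linear_combination hi)

lemma poch_reverse (a : ℂ) (l : ℕ) : poch a l = (-1) ^ l * poch (1 - a - l) l := by
  rcases l with _ | p
  · simp [poch]
  unfold poch
  rw [← Finset.prod_range_reflect (fun i => (a + i : ℂ)) (p + 1)]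
  have : ∀ j ∈ Finset.range (p + 1), (a + ((p + 1 - 1 - j : ℕ) : ℂ)) =
      -(1 - a - ((p + 1 : ℕ) : ℂ) + (j : ℂ)) := by
    intro j hj
    have hj' : j ≤ p := Nat.lt_succ_iff.mp (Finset.mem_range.mp hj)
    have : ((p + 1 - 1 - j : ℕ) : ℂ) = (p : ℂ) - j := by
      rw [Nat.succ_sub_one, Nat.cast_sub hj']
    rw [this]; push_cast; ring
  rw [Finset.prod_congr rfl this]
  have : ∀ j ∈ Finset.range (p + 1), -(1 - a - ((p + 1 : ℕ) : ℂ) + (j : ℂ)) =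
      (-1 : ℂ) * (1 - a - ((p + 1 : ℕ) : ℂ) + (j : ℂ)) := fun j _ => by ring
  rw [Finset.prod_congr rfl this, Finset.prod_mul_distrib, Finset.prod_const, Finset.card_range]

lemma poch_neg_nat (N s : ℕ) (h : s ≤ N) :
    poch (-(N : ℂ)) s = (-1) ^ s * (N.descFactorial s : ℕ) := by
  induction s with
  | zero => simp [poch]
  | succ p ih =>
    rw [poch_succ, ih (by omega), Nat.descFactorial_succ]
    have : ((N - p : ℕ) : ℂ) = (N : ℂ) - p := Nat.cast_sub (by omega)
    push_cast [this]
    ring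

lemma poch_neg_nat_zero (N s : ℕ) (h : N < s) : poch (-(N : ℂ)) s = 0 :=
  Finset.prod_eq_zero (Finset.mem_range.mpr h) (by simp)

lemma Gamma_poch (a : ℂ) (l : ℕ) (h : ∀ i : ℕ, i < l → a + i ≠ 0) :
    Complex.Gamma (a + l) = Complex.Gamma a * poch a l := by
  induction l with
  | zero => simp [poch]
  | succ p ih =>
    have e : a + ((p + 1 : ℕ) : ℂ) = (a + p) + 1 := by push_cast; ring
    rw [e, Complex.Gamma_add_one _ (h p (by omega)), ih (fun i hi => h i (by omega)), poch_succ]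
    ring

lemma chu (N : ℕ) (b : ℂ) : ∀ c : ℂ,
    ∑ s ∈ Finset.range (N + 1),
      ((-1 : ℂ) ^ s * (N.choose s : ℕ) * poch b s * poch (c + s) (N - s)) = poch (c - b) N := by
  induction N with
  | zero => intro c; simp [poch]
  | succ N ih =>
    intro c
    rw [Finset.sum_range_succ']
    have hf0 : (-1 : ℂ) ^ 0 * ((N + 1).choose 0 : ℕ) * poch b 0 * poch (c + (0 : ℕ)) (N + 1 - 0)
        = poch (c + (0 : ℕ)) (N + 1) := by
      simp [poch_zero]
    have hsplit : ∀ t ∈ Finset.range (N + 1),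
        ((-1 : ℂ) ^ (t + 1) * ((N + 1).choose (t + 1) : ℕ) * poch b (t + 1) *
          poch (c + ((t + 1 : ℕ) : ℂ)) (N + 1 - (t + 1)))
        = ((-1 : ℂ) ^ (t + 1) * (N.choose (t + 1) : ℕ) * poch b (t + 1) *
            poch (c + ((t + 1 : ℕ) : ℂ)) (N - t))
          + (-((-1 : ℂ) ^ t * (N.choose t : ℕ) * (poch b t * (b + t)) *
              poch ((c + 1) + (t : ℂ)) (N - t))) := by
      intro t _
      rw [Nat.choose_succ_succ, Nat.succ_sub_succ]
      have e1 : poch b (t + 1) = poch b t * (b + t) := poch_succ b t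
      have e2 : (c + ((t + 1 : ℕ) : ℂ)) = (c + 1) + (t : ℂ) := by push_cast; ring
      rw [e1, e2]
      push_cast
      ring
    rw [Finset.sum_congr rfl hsplit, Finset.sum_add_distrib]
    -- First part plus f 0 rebuilds a sum with N.choose
    have hA : (∑ t ∈ Finset.range (N + 1),
          ((-1 : ℂ) ^ (t + 1) * (N.choose (t + 1) : ℕ) * poch b (t + 1) *
            poch (c + ((t + 1 : ℕ) : ℂ)) (N - t)))
        + ((-1 : ℂ) ^ 0 * ((N + 1).choose 0 : ℕ) * poch b 0 * poch (c + ((0 : ℕ) : ℂ)) (N + 1 - 0))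
        = ∑ s ∈ Finset.range (N + 1),
            ((-1 : ℂ) ^ s * (N.choose s : ℕ) * poch b s * ((c + s) * poch ((c + 1) + s) (N - s))) := by
      have := Finset.sum_range_succ' (fun s =>
        ((-1 : ℂ) ^ s * (N.choose s : ℕ) * poch b s * poch (c + (s : ℂ)) (N + 1 - s))) (N + 1)
      simp only [Nat.succ_sub_succ] at this ⊢
      rw [show (∑ t ∈ Finset.range (N + 1),
          ((-1 : ℂ) ^ (t + 1) * (N.choose (t + 1) : ℕ) * poch b (t + 1) *
            poch (c + ((t + 1 : ℕ) : ℂ)) (N - t)))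
        + ((-1 : ℂ) ^ 0 * ((N + 1).choose 0 : ℕ) * poch b 0 * poch (c + ((0 : ℕ) : ℂ)) (N + 1 - 0))
        = ∑ s ∈ Finset.range (N + 2),
            ((-1 : ℂ) ^ s * (N.choose s : ℕ) * poch b s * poch (c + (s : ℂ)) (N + 1 - s)) from ?_]
      · rw [Finset.sum_range_succ]
        have : (N.choose (N + 1) : ℂ) = 0 := by simp
        rw [this]
        simp only [mul_zero, zero_mul, mul_zero, add_zero]
        refine Finset.sum_congr rfl fun s hs => ?_
        have hs' : s ≤ N := Nat.lt_succ_iff.mp (Finset.mem_range.mp hs)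
        have : N + 1 - s = (N - s) + 1 := by omega
        rw [this, poch_succ']
        have : c + (s : ℂ) + 1 = (c + 1) + (s : ℂ) := by ring
        rw [this]
      · rw [this]
        push_cast
        simp [Nat.choose_zero_right, poch_zero]
    rw [add_right_comm, hA, ← Finset.sum_add_distrib]
    have hcomb : ∀ s ∈ Finset.range (N + 1),
        ((-1 : ℂ) ^ s * (N.choose s : ℕ) * poch b s * ((c + s) * poch ((c + 1) + s) (N - s)))
          + (-((-1 : ℂ) ^ s * (N.choose s : ℕ) * (poch b s * (b + s)) *
              poch ((c + 1) + (s : ℂ)) (N - s)))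
        = (c - b) * ((-1 : ℂ) ^ s * (N.choose s : ℕ) * poch b s * poch ((c + 1) + s) (N - s)) := by
      intro s _; ring
    rw [Finset.sum_congr rfl hcomb, ← Finset.mul_sum, ih (c + 1)]
    have : (c + 1) - b = (c - b) + 1 := by ring
    rw [this, ← poch_succ']

lemma chu_div (N : ℕ) (b c : ℂ) (hc : ∀ i : ℕ, c + i ≠ 0) :
    ∑ s ∈ Finset.range (N + 1), poch b s * poch (-(N : ℂ)) s / (poch c s * (s.factorial : ℂ))
      = poch (c - b) N / poch c N := by
  rw [← chu N b c, Finset.sum_div]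
  refine Finset.sum_congr rfl fun s hs => ?_
  have hs' : s ≤ N := Nat.lt_succ_iff.mp (Finset.mem_range.mp hs)
  have hN : poch c N = poch c s * poch (c + s) (N - s) := by
    rw [← poch_add]
    congr 1
    omega
  have hneg : poch (-(N : ℂ)) s = (-1) ^ s * ((s.factorial * N.choose s : ℕ) : ℂ) := by
    rw [poch_neg_nat N s hs', Nat.descFactorial_eq_factorial_mul_choose]
  have hcs : poch c s ≠ 0 := poch_ne_zero _ _ hc
  have hcs2 : poch (c + s) (N - s) ≠ 0 := poch_ne_zero _ _ (fun i => by
    have := hc (s + i)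
    intro h0
    exact this (by push_cast; linear_combination h0))
  have hfac : (s.factorial : ℂ) ≠ 0 := Nat.cast_ne_zero.mpr s.factorial_ne_zero
  rw [hN, hneg]
  push_cast
  field_simp

/-- Substituting Gauss's evaluation of the inner `₂F₁` series: for `α = -k` and `Re β < -nk`,
the identity (8), first step, of the paper. -/
theorem gauss_substitution_identity (k n : ℕ) (hk : 0 < k) (hn : 0 < n)
    (α β m : ℂ) (hα : α = -(k : ℂ)) (hre : β.re < -(n * k : ℕ))
    (h1 : ∀ N : ℕ, β + 1 ≠ -(N : ℂ))
    (h2 : ∀ N : ℕ, α + β + 1 ≠ -(N : ℂ))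
    (h3 : ∀ N : ℕ, β + 1 - m ≠ -(N : ℂ))
    (h4 : ∀ N : ℕ, α + β + 1 - m ≠ -(N : ℂ))
    (h5 : ∀ N : ℕ, m ≠ -(N : ℂ))
    (h6 : ∀ N : ℕ, m + 1 ≠ -(N : ℂ))
    (h7 : ∀ N : ℕ, m - β ≠ -(N : ℂ)) :
    (Complex.Gamma (β + 1) / Complex.Gamma (α + β + 1)) *
        ∑ j ∈ Finset.range (k + 1),
          poch (β + 1) (n * j) * poch m ((n + 1) * j) * poch α j /
            (poch (α + β + 1) ((n + 1) * j) * poch (m + 1) (n * j) * (Nat.factorial j : ℂ)) =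
      (Complex.Gamma (β + 1 - m) / Complex.Gamma (α + β + 1 - m)) *
        ∑ j ∈ Finset.range (k + 1),
          (poch α j * poch m ((n + 1) * j) * (-1 : ℂ) ^ j /
              (poch (m - β) j * poch (m + 1) (n * j) * (Nat.factorial j : ℂ))) *
            ∑' s : ℕ, poch (m + (j : ℂ) * ((n : ℂ) + 1)) s * poch (α + (j : ℂ)) s /
              (poch (m - β + (j : ℂ)) s * (Nat.factorial s : ℂ)) := by
  subst hα
  set a : ℂ := -(k : ℂ) + β + 1 with ha
  have hγ1 : Complex.Gamma a ≠ 0 := Complex.Gamma_ne_zero h2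
  have hγ2 : Complex.Gamma (a - m) ≠ 0 := Complex.Gamma_ne_zero h4
  rw [Finset.mul_sum, Finset.mul_sum]
  refine Finset.sum_congr rfl fun j hj => ?_
  have hjk : j ≤ k := Nat.lt_succ_iff.mp (Finset.mem_range.mp hj)
  have hαj : (-(k : ℂ) + (j : ℂ)) = -(((k - j : ℕ)) : ℂ) := by
    rw [Nat.cast_sub hjk]; ring
  have hcne : ∀ i : ℕ, (m - β + (j : ℂ)) + (i : ℂ) ≠ 0 := fun i h0 =>
    h7 (j + i) (by push_cast; linear_combination h0)
  have htsum : (∑' s : ℕ, poch (m + (j : ℂ) * ((n : ℂ) + 1)) s * poch (-(k : ℂ) + (j : ℂ)) s /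
      (poch (m - β + (j : ℂ)) s * (Nat.factorial s : ℂ)))
      = poch ((m - β + (j : ℂ)) - (m + (j : ℂ) * ((n : ℂ) + 1))) (k - j) /
          poch (m - β + (j : ℂ)) (k - j) := by
    rw [tsum_eq_sum (s := Finset.range ((k - j) + 1)) ?_]
    · rw [← chu_div (k - j) (m + (j : ℂ) * ((n : ℂ) + 1)) (m - β + (j : ℂ)) hcne]
      refine Finset.sum_congr rfl fun s _ => ?_
      rw [hαj]
    · intro s hs
      have hs' : k - j < s := by
        simpa using hs
      rw [hαj, poch_neg_nat_zero _ _ hs']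
      simp
  rw [htsum]
  -- nonzero facts
  have hPAB : poch a ((n + 1) * j) ≠ 0 := poch_ne_zero' _ _ h2
  have hPM1 : poch (m + 1) (n * j) ≠ 0 := poch_ne_zero' _ _ h6
  have hPMB : poch (m - β) j ≠ 0 := poch_ne_zero' _ _ h7
  have hPCN : poch (m - β + (j : ℂ)) (k - j) ≠ 0 := poch_ne_zero _ _ hcne
  have hF : (j.factorial : ℂ) ≠ 0 := Nat.cast_ne_zero.mpr j.factorial_ne_zero
  -- Gamma shift identities
  have hane : ∀ i : ℕ, i < k → a + i ≠ 0 := fun i _ h0 => h2 i (by linear_combination h0)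
  have hamne : ∀ i : ℕ, i < k → (a - m) + i ≠ 0 := fun i _ h0 => h4 i (by linear_combination h0)
  have e1 : Complex.Gamma (β + 1) = Complex.Gamma a * poch a k := by
    have := Gamma_poch a k hane
    rw [show a + ((k : ℕ) : ℂ) = β + 1 by rw [ha]; ring] at this
    exact this
  have e2 : Complex.Gamma (β + 1 - m) = Complex.Gamma (a - m) * poch (a - m) k := by
    have := Gamma_poch (a - m) k hamne
    rw [show (a - m) + ((k : ℕ) : ℂ) = β + 1 - m by rw [ha]; ring] at this
    exact this
  have e3 : poch (a - m) k = (-1 : ℂ) ^ k * poch (m - β) k := by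
    rw [poch_reverse (a - m) k]
    congr 2
    rw [ha]; ring
  have e4 : poch (m - β) j * poch (m - β + (j : ℂ)) (k - j) = poch (m - β) k := by
    rw [← poch_add]
    congr 1
    omega
  have e5 : poch ((m - β + (j : ℂ)) - (m + (j : ℂ) * ((n : ℂ) + 1))) (k - j)
      = (-1 : ℂ) ^ (k - j) * poch (a + (((n + 1) * j : ℕ) : ℂ)) (k - j) := by
    rw [poch_reverse]
    congr 2
    rw [Nat.cast_sub hjk, ha]
    push_cast
    ring
  have e67 : poch a k * poch (β + 1) (n * j)
      = poch a ((n + 1) * j) * poch (a + (((n + 1) * j : ℕ) : ℂ)) (k - j) := by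
    rw [show (β + 1 : ℂ) = a + ((k : ℕ) : ℂ) by rw [ha]; ring, ← poch_add, ← poch_add]
    congr 1
    rw [add_mul, one_mul]
    omega
  have esign : (-1 : ℂ) ^ j * (-1 : ℂ) ^ (k - j) * (-1 : ℂ) ^ k = 1 := by
    rw [← pow_add, ← pow_add, show j + (k - j) + k = 2 * k by omega, pow_mul]
    norm_num
  have hKX : Complex.Gamma (β + 1) * poch (β + 1) (n * j) *
        (poch (m - β) j * poch (m - β + (j : ℂ)) (k - j)) * Complex.Gamma (a - m)
      = Complex.Gamma (β + 1 - m) *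
          ((-1 : ℂ) ^ j * poch ((m - β + (j : ℂ)) - (m + (j : ℂ) * ((n : ℂ) + 1))) (k - j)) *
          (poch a ((n + 1) * j) * Complex.Gamma a) := by
    rw [e1, e2, e3, e5, ← e4]
    linear_combination (Complex.Gamma a * Complex.Gamma (a - m) * poch (m - β) j *
        poch (m - β + (j : ℂ)) (k - j)) * e67 -
      (Complex.Gamma a * Complex.Gamma (a - m) * poch (m - β) j *
        poch (m - β + (j : ℂ)) (k - j) * poch a ((n + 1) * j) *
        poch (a + (((n + 1) * j : ℕ) : ℂ)) (k - j)) * esign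
  have hK : Complex.Gamma (β + 1) * poch (β + 1) (n * j) /
        (Complex.Gamma a * poch a ((n + 1) * j))
      = Complex.Gamma (β + 1 - m) *
          ((-1 : ℂ) ^ j * poch ((m - β + (j : ℂ)) - (m + (j : ℂ) * ((n : ℂ) + 1))) (k - j)) /
          (Complex.Gamma (a - m) * (poch (m - β) j * poch (m - β + (j : ℂ)) (k - j))) := by
    rw [div_eq_div_iff (mul_ne_zero hγ1 hPAB)
      (mul_ne_zero hγ2 (mul_ne_zero hPMB hPCN))]
    linear_combination hKX
  linear_combination (poch (-(k : ℂ)) j * poch m ((n + 1) * j) /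
    (poch (m + 1) (n * j) * (j.factorial : ℂ))) * hK
end
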